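/- Let γ, Φ : [0,1] → [0,∞) with γ continuous, c₂ ∈ (0,1] with γ(t) ≥ c₂‖γ‖ for t ∈ [a,b], let k : [0,1]×[0,1] → [0,∞) satisfy k(t,s) ≤ Φ(s) for all t ∈ [0,1] and k(t,s) ≥ c₁Φ(s) for t ∈ [a,b], where c₁ ∈ (0,1]. Suppose u : [0,1] → ℝ is given by u(t) = γ(t)·A + ∫₀¹ k(t,s) h(s) ds, where A ≥ 0 is a constant and h : [0,1] → [0,∞) is integrable. Then min_{t∈[a,b]} u(t) ≥ c·‖u‖ with c = min{c₁, c₂}, where ‖u‖ is the sup norm of u on [0,1]. -/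

import Mathlib

/-!
On `[0,1]` the triangle inequality gives `|u| ≤ ‖γ‖A + ∫₀¹ Φh`, while on `[a,b]` the lower
bounds on `γ` and `k` give `u ≥ c₂‖γ‖A + c₁∫₀¹ Φh`. Both summands are nonnegative, so
replacing `c₁` and `c₂` by their minimum compares the two bounds.
-/

open Set intervalIntegral

lemma abs_le_sSup_abs_image {X : Type*} [TopologicalSpace X] {K : Set X} {f : X → ℝ}
    {x : X} (hK : IsCompact K) (hf : ContinuousOn f K) (hx : x ∈ K) :
    |f x| ≤ sSup ((fun y => |f y|) '' K) :=
  le_csSup (hK.image_of_continuousOn hf.abs).bddAbove (mem_image_of_mem _ hx)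

lemma intervalIntegral.integral_mul_le_integral_mul_of_le {α β : ℝ} {f g w : ℝ → ℝ}
    (hαβ : α ≤ β) (hf : IntervalIntegrable (fun x => f x * w x) MeasureTheory.volume α β)
    (hg : IntervalIntegrable (fun x => g x * w x) MeasureTheory.volume α β)
    (hw : ∀ x ∈ Icc α β, 0 ≤ w x) (hfg : ∀ x ∈ Icc α β, f x ≤ g x) :
    ∫ x in α..β, f x * w x ≤ ∫ x in α..β, g x * w x :=
  integral_mono_on hαβ hf hg fun x hx => mul_le_mul_of_nonneg_right (hfg x hx) (hw x hx)

lemma intervalIntegral.const_mul_integral_mul_le_of_const_mul_le {α β c : ℝ}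
    {f g w : ℝ → ℝ} (hαβ : α ≤ β)
    (hg : IntervalIntegrable (fun x => g x * w x) MeasureTheory.volume α β)
    (hf : IntervalIntegrable (fun x => f x * w x) MeasureTheory.volume α β)
    (hw : ∀ x ∈ Icc α β, 0 ≤ w x) (hgf : ∀ x ∈ Icc α β, c * g x ≤ f x) :
    c * ∫ x in α..β, g x * w x ≤ ∫ x in α..β, f x * w x := by
  have hcg : IntervalIntegrable (fun x => c * g x * w x) MeasureTheory.volume α β := by
    simpa only [mul_assoc] using hg.const_mul c
  simpa only [mul_assoc, integral_const_mul] using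
    integral_mul_le_integral_mul_of_le hαβ hcg hf hw hgf

lemma abs_mul_add_le_of_le {g A J M I : ℝ} (hA : 0 ≤ A) (hg : |g| ≤ M) (hJ₀ : 0 ≤ J)
    (hJ : J ≤ I) : |g * A + J| ≤ M * A + I :=
  calc |g * A + J| ≤ |g| * A + J := by
        grw [abs_add_le, abs_mul, abs_of_nonneg hA, abs_of_nonneg hJ₀]
    _ ≤ M * A + I := add_le_add (mul_le_mul_of_nonneg_right hg hA) hJ

lemma min_mul_add_le {c₁ c₂ x y : ℝ} (hx : 0 ≤ x) (hy : 0 ≤ y) :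
    min c₁ c₂ * (x + y) ≤ c₂ * x + c₁ * y := by
  nlinarith [min_le_left c₁ c₂, min_le_right c₁ c₂]

theorem stmt4_general (a b c₁ c₂ A : ℝ) (ha : 0 < a) (hb : b < 1)
    (hc₁ : c₁ ∈ Set.Ioc (0:ℝ) 1) (hc₂ : c₂ ∈ Set.Ioc (0:ℝ) 1) (hA : 0 ≤ A)
    (γ Φ h : ℝ → ℝ) (k : ℝ → ℝ → ℝ) (u : ℝ → ℝ)
    (hγc : Continuous γ)
    (hγ : ∀ t ∈ Set.Icc a b, γ t ≥ c₂ * sSup ((fun t => |γ t|) '' Set.Icc (0:ℝ) 1))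
    (hk0 : ∀ t ∈ Set.Icc (0:ℝ) 1, ∀ s ∈ Set.Icc (0:ℝ) 1, 0 ≤ k t s)
    (hkup : ∀ t ∈ Set.Icc (0:ℝ) 1, ∀ s ∈ Set.Icc (0:ℝ) 1, k t s ≤ Φ s)
    (hklow : ∀ t ∈ Set.Icc a b, ∀ s ∈ Set.Icc (0:ℝ) 1, c₁ * Φ s ≤ k t s)
    (hh0 : ∀ s ∈ Set.Icc (0:ℝ) 1, 0 ≤ h s)
    (hhint : ∀ t ∈ Set.Icc (0:ℝ) 1,
      IntervalIntegrable (fun s => k t s * h s) MeasureTheory.volume 0 1)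
    (hΦint : IntervalIntegrable (fun s => Φ s * h s) MeasureTheory.volume 0 1)
    (hu : ∀ t ∈ Set.Icc (0:ℝ) 1, u t = γ t * A + ∫ s in (0:ℝ)..1, k t s * h s) :
    ∀ t ∈ Set.Icc a b,
      u t ≥ min c₁ c₂ * sSup ((fun t => |u t|) '' Set.Icc (0:ℝ) 1) := by
  intro t ht
  have ht01 : t ∈ Icc (0:ℝ) 1 := Icc_subset_Icc ha.le hb.le ht
  set Mγ := sSup ((fun t => |γ t|) '' Icc (0:ℝ) 1)
  set I := ∫ s in (0:ℝ)..1, Φ s * h s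
  have hγM : ∀ s ∈ Icc (0:ℝ) 1, |γ s| ≤ Mγ := fun s hs =>
    abs_le_sSup_abs_image isCompact_Icc hγc.continuousOn hs
  have hkh_nonneg : ∀ s ∈ Icc (0:ℝ) 1, 0 ≤ ∫ x in (0:ℝ)..1, k s x * h x := fun s hs =>
    integral_nonneg zero_le_one fun x hx => mul_nonneg (hk0 s hs x hx) (hh0 x hx)
  have hkh_le : ∀ s ∈ Icc (0:ℝ) 1, ∫ x in (0:ℝ)..1, k s x * h x ≤ I := fun s hs =>
    integral_mul_le_integral_mul_of_le zero_le_one (hhint s hs) hΦint hh0 (hkup s hs)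
  have hupper : ∀ s ∈ Icc (0:ℝ) 1, |u s| ≤ Mγ * A + I := fun s hs => by
    rw [hu s hs]
    exact abs_mul_add_le_of_le hA (hγM s hs) (hkh_nonneg s hs) (hkh_le s hs)
  have hlower : c₂ * (Mγ * A) + c₁ * I ≤ u t := by
    rw [hu t ht01, ← mul_assoc]
    gcongr
    · exact hγ t ht
    · exact const_mul_integral_mul_le_of_const_mul_le zero_le_one hΦint (hhint t ht01) hh0
        (hklow t ht)
  have hMγ : 0 ≤ Mγ := (abs_nonneg _).trans (hγM 0 (left_mem_Icc.2 zero_le_one))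
  have hI : 0 ≤ I := (hkh_nonneg t ht01).trans (hkh_le t ht01)
  calc min c₁ c₂ * sSup ((fun t => |u t|) '' Icc (0:ℝ) 1)
      ≤ min c₁ c₂ * (Mγ * A + I) := by
        gcongr
        · exact le_min hc₁.1.le hc₂.1.le
        · exact csSup_le ((nonempty_Icc.2 zero_le_one).image _) (forall_mem_image.2 hupper)
    _ ≤ c₂ * (Mγ * A) + c₁ * I := min_mul_add_le (mul_nonneg hMγ hA) hI
    _ ≤ u t := hlower

/-- Cone invariance: if `u(t) = γ(t)·A + ∫₀¹ k(t,s)h(s)ds` with `A ≥ 0`, `h ≥ 0`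
integrable, `γ(t) ≥ c₂‖γ‖` on `[a,b]`, `c₁Φ(s) ≤ k(t,s) ≤ Φ(s)` appropriately, then
`min_{[a,b]} u ≥ c‖u‖` with `c = min{c₁,c₂}`. -/
theorem stmt4 (a b c₁ c₂ A : ℝ) (ha : 0 < a) (hab : a < b) (hb : b < 1)
    (hc₁ : c₁ ∈ Set.Ioc (0:ℝ) 1) (hc₂ : c₂ ∈ Set.Ioc (0:ℝ) 1) (hA : 0 ≤ A)
    (γ Φ h : ℝ → ℝ) (k : ℝ → ℝ → ℝ) (u : ℝ → ℝ)
    (hγc : Continuous γ) (hγ0 : ∀ t ∈ Set.Icc (0:ℝ) 1, 0 ≤ γ t)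
    (hΦ0 : ∀ s ∈ Set.Icc (0:ℝ) 1, 0 ≤ Φ s)
    (hγ : ∀ t ∈ Set.Icc a b, γ t ≥ c₂ * sSup ((fun t => |γ t|) '' Set.Icc (0:ℝ) 1))
    (hk0 : ∀ t ∈ Set.Icc (0:ℝ) 1, ∀ s ∈ Set.Icc (0:ℝ) 1, 0 ≤ k t s)
    (hkup : ∀ t ∈ Set.Icc (0:ℝ) 1, ∀ s ∈ Set.Icc (0:ℝ) 1, k t s ≤ Φ s)
    (hklow : ∀ t ∈ Set.Icc a b, ∀ s ∈ Set.Icc (0:ℝ) 1, c₁ * Φ s ≤ k t s)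
    (hh0 : ∀ s ∈ Set.Icc (0:ℝ) 1, 0 ≤ h s)
    (hhint : ∀ t ∈ Set.Icc (0:ℝ) 1,
      IntervalIntegrable (fun s => k t s * h s) MeasureTheory.volume 0 1)
    (hΦint : IntervalIntegrable (fun s => Φ s * h s) MeasureTheory.volume 0 1)
    (hu : ∀ t ∈ Set.Icc (0:ℝ) 1, u t = γ t * A + ∫ s in (0:ℝ)..1, k t s * h s) :
    ∀ t ∈ Set.Icc a b,
      u t ≥ min c₁ c₂ * sSup ((fun t => |u t|) '' Set.Icc (0:ℝ) 1) :=
  stmt4_general a b c₁ c₂ A ha hb hc₁ hc₂ hA γ Φ h k u hγc hγ hk0 hkup hklow hh0 hhint hΦint hu
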